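/- For all integers r, s and all natural numbers n, the following two identities hold: Σ_{i=0}^{n} U_{s+2i}² − q^{s−r}·(Σ_{i=0}^{n} U_{r+2i}²) = a_{n+1}·U_{s−r}·U_{2n+r+s}, and Σ_{i=0}^{n} V_{s+2i}² − q^{s−r}·(Σ_{i=0}^{n} V_{r+2i}²) = Δ·a_{n+1}·U_{s−r}·U_{2n+r+s}. -/

import Mathlib

/-!
Over a commutative ring in which `q` is a unit, a solution of the two-sided recurrence
`f n = p * f (n - 1) - q * f (n - 2)` is determined by `f 0` and `f 1`, and the solutions are
closed under shifts and linear combinations. So any identity that is linear in a shifted copy of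
`U` needs to be checked at two points only. This gives the addition formula, the reflection
`U (-k) = -q⁻ᵏ U k`, and Vajda's identity
`U a U b - U (a - t) U (b + t) = qᵃ⁻ᵗ U t U (b - a + t)`, whose diagonal case `a = b` is
Catalan's identity `U m ² - qᵐ⁻ᵏ U k ² = U (m - k) U (m + k)`. Applied termwise, Catalan's
identity turns the difference of the two sums of squares into `U (s - r) * ∑ U (r + s + 4 i)`,
and for `q² = 1` this sum telescopes, since then `U x U y - U (x - 2) U (y - 2) = p U (x + y - 2)`.
For `V = 2 U (· + 1) - p U` the identity `V m ² - Δ U m ² = 4 qᵐ` reduces the second claim to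
the first.
-/

variable {R : Type*} [CommRing R]

def IsLucasRec (p q : R) (f : ℤ → R) : Prop :=
  ∀ n, f n = p * f (n - 1) - q * f (n - 2)

namespace IsLucasRec

variable {p q : R} {f g : ℤ → R}

theorem add_two (h : IsLucasRec p q f) (n : ℤ) : f (n + 2) = p * f (n + 1) - q * f n := by
  have h := h (n + 2)
  rwa [add_sub_assoc, add_sub_assoc, sub_self, add_zero, show (2 : ℤ) - 1 = 1 by norm_num] at h

theorem comp_add_right (h : IsLucasRec p q f) (k : ℤ) : IsLucasRec p q (fun n ↦ f (n + k)) :=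
  fun n ↦ by simpa only [sub_add_eq_add_sub] using h (n + k)

theorem const_mul (h : IsLucasRec p q f) (c : R) : IsLucasRec p q (fun n ↦ c * f n) :=
  fun n ↦ by dsimp only; rw [h n]; ring

theorem sub (hf : IsLucasRec p q f) (hg : IsLucasRec p q g) :
    IsLucasRec p q (fun n ↦ f n - g n) :=
  fun n ↦ by dsimp only; rw [hf n, hg n]; ring

theorem ext (hq : IsUnit q) (hf : IsLucasRec p q f) (hg : IsLucasRec p q g)
    (h0 : f 0 = g 0) (h1 : f 1 = g 1) : f = g := by
  have up (n : ℤ) (hn : f n = g n) (hn1 : f (n + 1) = g (n + 1)) : f (n + 2) = g (n + 2) := by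
    rw [hf.add_two, hg.add_two, hn, hn1]
  have down (n : ℤ) (hn : f n = g n) (hn1 : f (n + 1) = g (n + 1)) : f (n - 1) = g (n - 1) := by
    refine hq.mul_left_cancel ?_
    have hf' := hf.add_two (n - 1)
    have hg' := hg.add_two (n - 1)
    rw [sub_add_cancel, show n - 1 + 2 = n + 1 by ring] at hf' hg'
    linear_combination hf' - hg' + p * hn - hn1
  have consecutive (n : ℤ) : f n = g n ∧ f (n + 1) = g (n + 1) := by
    induction n with
    | zero => simpa using ⟨h0, h1⟩
    | succ n ih => exact ⟨ih.2, by rw [add_assoc, one_add_one_eq_two]; exact up n ih.1 ih.2⟩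
    | pred n ih => exact ⟨down _ ih.1 ih.2, by rw [sub_add_cancel]; exact ih.1⟩
  exact funext fun n ↦ (consecutive n).1

end IsLucasRec

structure IsLucasU (p q : R) (U : ℤ → R) : Prop where
  isLucasRec : IsLucasRec p q U
  apply_zero : U 0 = 0
  apply_one : U 1 = 1

namespace IsLucasU

theorem two {p q : R} {U : ℤ → R} (hU : IsLucasU p q U) : U 2 = p := by
  simpa [hU.apply_zero, hU.apply_one] using hU.isLucasRec.add_two 0

variable {p : R} {q : Rˣ} {U V : ℤ → R}

theorem neg_one (hU : IsLucasU p q U) : U (-1) = -↑q⁻¹ := by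
  have h := hU.isLucasRec 1
  rw [sub_self, show (1 : ℤ) - 2 = -1 by norm_num, hU.apply_zero, hU.apply_one, mul_zero,
    zero_sub] at h
  linear_combination (↑q⁻¹ : R) * h - U (-1) * q.inv_mul

theorem add (hU : IsLucasU p q U) (m k : ℤ) :
    U (m + k) = U (m + 1) * U k - q * U m * U (k - 1) := by
  have hL : IsLucasRec p q (fun k ↦ U (m + k)) := by
    simpa only [add_comm m] using hU.isLucasRec.comp_add_right m
  have hR : IsLucasRec p q (fun k ↦ U (m + 1) * U k - q * U m * U (k - 1)) := by
    simpa only [sub_eq_add_neg] using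
      (hU.isLucasRec.const_mul _).sub ((hU.isLucasRec.comp_add_right (-1)).const_mul (q * U m))
  refine congrFun (hL.ext q.isUnit hR ?_ ?_) k
  · simp [hU.apply_zero, hU.neg_one, mul_right_comm _ (U m)]
  · simp [hU.apply_zero, hU.apply_one]

theorem neg (hU : IsLucasU p q U) (k : ℤ) : U (-k) = -↑(q ^ (-k)) * U k := by
  -- Read backwards, the recurrence is again a Lucas recurrence, with parameters `(p / q, 1 / q)`.
  have hL : IsLucasRec (p * ↑q⁻¹) ↑q⁻¹ (fun k ↦ U (-k)) := fun k ↦ by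
    have h := hU.isLucasRec.add_two (-k)
    rw [show -k + 2 = -(k - 2) by ring, show -k + 1 = -(k - 1) by ring] at h
    linear_combination (↑q⁻¹ : R) * h - U (-k) * q.inv_mul
  have hR : IsLucasRec (p * ↑q⁻¹) ↑q⁻¹ (fun k ↦ -↑(q ^ (-k)) * U k) := fun k ↦ by
    have h := hU.isLucasRec k
    have e1 : q ^ (-(k - 1)) = q ^ (-k) * q := by group
    have e2 : q ^ (-(k - 2)) = q ^ (-k) * q * q := by group
    simp only [e1, e2, Units.val_mul]
    linear_combination (-↑(q ^ (-k)) : R) * h +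
      (p * ↑(q ^ (-k)) * U (k - 1) - ↑(q ^ (-k)) * q * U (k - 2)) * q.inv_mul
  refine congrFun (hL.ext (Units.isUnit _) hR ?_ ?_) k
  · simp [hU.apply_zero]
  · simp [hU.neg_one, hU.apply_one]

theorem mul_sub_mul (hU : IsLucasU p q U) (a b t : ℤ) :
    U a * U b - U (a - t) * U (b + t) = ↑(q ^ (a - t)) * U t * U (b - a + t) := by
  have hL : IsLucasRec p q (fun b ↦ U a * U b - U (a - t) * U (b + t)) :=
    (hU.isLucasRec.const_mul _).sub ((hU.isLucasRec.comp_add_right t).const_mul _)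
  have hR : IsLucasRec p q (fun b ↦ ↑(q ^ (a - t)) * U t * U (b - a + t)) := by
    simpa only [sub_add_eq_add_sub, add_sub_assoc] using
      (hU.isLucasRec.comp_add_right (t - a)).const_mul (↑(q ^ (a - t)) * U t)
  refine congrFun (hL.ext q.isUnit hR ?_ ?_) b
  · have hinv : (↑(q ^ (a - t)) * ↑(q ^ (-(a - t))) : R) = 1 := by
      rw [← Units.val_mul, ← zpow_add, add_neg_cancel, zpow_zero, Units.val_one]
    rw [show 0 - a + t = -(a - t) by ring, hU.neg, hU.apply_zero, zero_add]
    linear_combination U t * U (a - t) * hinv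
  · have hq : (↑(q ^ (a - t)) * ↑(q ^ (-(a - t - 1))) : R) = q := by
      rw [← Units.val_mul, ← zpow_add, show a - t + -(a - t - 1) = 1 by ring, zpow_one]
    have hadd := hU.add t (a - t)
    rw [add_sub_cancel] at hadd
    rw [show 1 - a + t = -(a - t - 1) by ring, hU.neg, hU.apply_one, add_comm 1 t]
    linear_combination hadd + U t * U (a - t - 1) * hq

theorem sq_sub_zpow_mul_sq (hU : IsLucasU p q U) (m k : ℤ) :
    U m ^ 2 - ↑(q ^ (m - k)) * U k ^ 2 = U (m - k) * U (m + k) := by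
  have h := hU.mul_sub_mul m m k
  rw [sub_self, zero_add] at h
  linear_combination h

theorem mul_sub_sq_mul (hU : IsLucasU p q U) (x y : ℤ) :
    U x * U y - (q : R) ^ 2 * U (x - 2) * U (y - 2) = p * U (x + y - 2) := by
  have hadd := hU.add (x - 1) (y - 1)
  have hx := hU.isLucasRec x
  have hy := hU.isLucasRec y
  rw [show x - 1 + (y - 1) = x + y - 2 by ring, sub_add_cancel, show y - 1 - 1 = y - 2 by ring]
    at hadd
  linear_combination (-p) * hadd + U x * hy - q * U (y - 2) * hx

theorem mul_sum_range_add_four_mul (hq : (q : R) ^ 2 = 1) (hU : IsLucasU p q U) (t : ℤ)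
    (n : ℕ) :
    p * ∑ i ∈ Finset.range (n + 1), U (t + 4 * i) = U (2 * (n + 1)) * U (2 * n + t) := by
  induction n with
  | zero => simp [hU.two, mul_comm]
  | succ n ih =>
    rw [Finset.sum_range_succ, mul_add, ih]
    have h := hU.mul_sub_sq_mul (2 * (n + 1 + 1)) (2 * (n + 1) + t)
    rw [hq, show 2 * ((n : ℤ) + 1 + 1) - 2 = 2 * (n + 1) by ring,
      show 2 * ((n : ℤ) + 1) + t - 2 = 2 * n + t by ring,
      show 2 * ((n : ℤ) + 1 + 1) + (2 * (n + 1) + t) - 2 = t + 4 * (n + 1) by ring] at h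
    push_cast
    linear_combination -h

theorem sum_sq_sub_zpow_mul_sum_sq (hU : IsLucasU p q U) (r s : ℤ) (n : ℕ) :
    ∑ i ∈ Finset.range n, U (s + 2 * i) ^ 2 -
        ↑(q ^ (s - r)) * ∑ i ∈ Finset.range n, U (r + 2 * i) ^ 2 =
      U (s - r) * ∑ i ∈ Finset.range n, U (r + s + 4 * i) := by
  rw [Finset.mul_sum, Finset.mul_sum, ← Finset.sum_sub_distrib]
  refine Finset.sum_congr rfl fun i _ ↦ ?_
  have h := hU.sq_sub_zpow_mul_sq (s + 2 * i) (r + 2 * i)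
  rwa [show s + 2 * (i : ℤ) - (r + 2 * i) = s - r by ring,
    show s + 2 * (i : ℤ) + (r + 2 * i) = r + s + 4 * i by ring] at h

theorem lucasV_eq (hU : IsLucasU p q U) (hV : IsLucasRec p q V) (hV0 : V 0 = 2) (hV1 : V 1 = p) :
    V = fun m ↦ 2 * U (m + 1) - p * U m :=
  hV.ext q.isUnit (((hU.isLucasRec.comp_add_right 1).const_mul 2).sub (hU.isLucasRec.const_mul p))
    (by simp [hV0, hU.apply_zero, hU.apply_one])
    (by simp only [hV1, one_add_one_eq_two, hU.two, hU.apply_one]; ring)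

theorem lucasV_sq_sub_mul_sq (hU : IsLucasU p q U) (hV : IsLucasRec p q V) (hV0 : V 0 = 2)
    (hV1 : V 1 = p) (m : ℤ) : V m ^ 2 - (p ^ 2 - 4 * q) * U m ^ 2 = 4 * ↑(q ^ m) := by
  have hsimson := hU.mul_sub_mul m m 1
  have hrec := hU.isLucasRec (m + 1)
  have hpow : (↑(q ^ m) : R) = q * ↑(q ^ (m - 1)) := by
    rw [← Units.val_mul, ← zpow_one_add, add_sub_cancel]
  rw [sub_self, zero_add, hU.apply_one, mul_one] at hsimson
  rw [add_sub_cancel_right, show m + 1 - 2 = m - 1 by ring] at hrec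
  rw [hU.lucasV_eq hV hV0 hV1]
  linear_combination 4 * U (m + 1) * hrec + 4 * (q : R) * hsimson - 4 * hpow

theorem sum_lucasV_sq_sub_mul_sq (hU : IsLucasU p q U) (hV : IsLucasRec p q V) (hV0 : V 0 = 2)
    (hV1 : V 1 = p) (r s : ℤ) (n : ℕ) :
    ∑ i ∈ Finset.range n, V (s + 2 * i) ^ 2 -
        ↑(q ^ (s - r)) * ∑ i ∈ Finset.range n, V (r + 2 * i) ^ 2 =
      (p ^ 2 - 4 * q) * (∑ i ∈ Finset.range n, U (s + 2 * i) ^ 2 -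
        ↑(q ^ (s - r)) * ∑ i ∈ Finset.range n, U (r + 2 * i) ^ 2) := by
  simp only [Finset.mul_sum, ← Finset.sum_sub_distrib]
  refine Finset.sum_congr rfl fun i _ ↦ ?_
  have hpow : (↑(q ^ (s - r)) * ↑(q ^ (r + 2 * i)) : R) = ↑(q ^ (s + 2 * i)) := by
    rw [← Units.val_mul, ← zpow_add, show s - r + (r + 2 * (i : ℤ)) = s + 2 * i by ring]
  linear_combination hU.lucasV_sq_sub_mul_sq hV hV0 hV1 (s + 2 * i) -
    ↑(q ^ (s - r)) * hU.lucasV_sq_sub_mul_sq hV hV0 hV1 (r + 2 * i) - 4 * hpow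

end IsLucasU

theorem Int.val_units_zpow_eq_pow_natAbs (u : ℤˣ) (k : ℤ) :
    ((u ^ k : ℤˣ) : ℤ) = (u : ℤ) ^ k.natAbs := by
  obtain ⟨n, rfl | rfl⟩ := Int.eq_nat_or_neg k <;> simp [Int.units_inv_eq_self]

theorem stmt_12_general (p q : ℤ) (hp : p ≠ 0) (hq : q = 1 ∨ q = -1)
    (U V : ℤ → ℤ)
    (hU0 : U 0 = 0) (hU1 : U 1 = 1)
    (hUrec : ∀ n : ℤ, U n = p * U (n - 1) - q * U (n - 2))
    (hV0 : V 0 = 2) (hV1 : V 1 = p)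
    (hVrec : ∀ n : ℤ, V n = p * V (n - 1) - q * V (n - 2))
    (a : ℤ → ℤ) (ha : ∀ n : ℤ, p * a n = U (2 * n))
    (r s : ℤ) (n : ℕ) :
    (∑ i ∈ Finset.range (n + 1), U (s + 2 * i) ^ 2) - q ^ (s - r).natAbs * (∑ i ∈ Finset.range (n + 1), U (r + 2 * i) ^ 2) =
        a ((n : ℤ) + 1) * U (s - r) * U (2 * n + r + s) ∧
      (∑ i ∈ Finset.range (n + 1), V (s + 2 * i) ^ 2) - q ^ (s - r).natAbs * (∑ i ∈ Finset.range (n + 1), V (r + 2 * i) ^ 2) =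
        (p ^ 2 - 4 * q) * (a ((n : ℤ) + 1) * U (s - r) * U (2 * n + r + s)) := by
  obtain ⟨u, rfl⟩ : IsUnit q := Int.isUnit_iff.mpr hq
  have hU : IsLucasU p (u : ℤ) U := ⟨hUrec, hU0, hU1⟩
  have hsum := hU.mul_sum_range_add_four_mul
    (by rw [← Units.val_pow_eq_pow_val, Int.units_sq, Units.val_one]) (r + s) n
  rw [← Int.val_units_zpow_eq_pow_natAbs, hU.sum_lucasV_sq_sub_mul_sq hVrec hV0 hV1,
    hU.sum_sq_sub_zpow_mul_sum_sq]
  suffices h : p * (U (s - r) * ∑ i ∈ Finset.range (n + 1), U (r + s + 4 * i)) =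
      p * (a (n + 1) * U (s - r) * U (2 * n + r + s)) by
    have h := mul_left_cancel₀ hp h
    exact ⟨h, by rw [h]⟩
  rw [mul_left_comm, hsum, ← ha, ← add_assoc]
  ring

theorem stmt_12 (p q : ℤ) (hp : p ≠ 0) (hq : q = 1 ∨ q = -1)
    (hΔ : p ^ 2 - 4 * q ≠ 0)
    (U V : ℤ → ℤ)
    (hU0 : U 0 = 0) (hU1 : U 1 = 1)
    (hUrec : ∀ n : ℤ, U n = p * U (n - 1) - q * U (n - 2))
    (hV0 : V 0 = 2) (hV1 : V 1 = p)
    (hVrec : ∀ n : ℤ, V n = p * V (n - 1) - q * V (n - 2))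
    (a : ℤ → ℤ) (ha : ∀ n : ℤ, p * a n = U (2 * n))
    (r s : ℤ) (n : ℕ) :
    (∑ i ∈ Finset.range (n + 1), U (s + 2 * i) ^ 2) - q ^ (s - r).natAbs * (∑ i ∈ Finset.range (n + 1), U (r + 2 * i) ^ 2) =
        a ((n : ℤ) + 1) * U (s - r) * U (2 * n + r + s) ∧
      (∑ i ∈ Finset.range (n + 1), V (s + 2 * i) ^ 2) - q ^ (s - r).natAbs * (∑ i ∈ Finset.range (n + 1), V (r + 2 * i) ^ 2) =
        (p ^ 2 - 4 * q) * (a ((n : ℤ) + 1) * U (s - r) * U (2 * n + r + s)) :=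
  stmt_12_general p q hp hq U V hU0 hU1 hUrec hV0 hV1 hVrec a ha r s n
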